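/- arXiv:1204.5158 — 2 statements merged into one kernel-verified Lean document; each statement's English description precedes it below -/
import Mathlib

section
/- For g in SL(2,R) and a nonzero vector u in R², define the cocycle c_u(g) by the implicit equation n_{c_u(g)} = Ψ(g u)^{-1} g Ψ(u), where n_s = [[1,s],[0,1]]. Then the matrix Ψ(g u)^{-1} g Ψ(u) is indeed upper unipotent, so c_u(g) is well defined, and it satisfies c_{u_0}(g n_s) = c_{u_0}(g) + s and c_{u_0}(g a_t) = e^{-t} c_{u_0}(g), where u_0 = (1,0). -/
open Matrix

/-- The section `Ψ : ℝ² \ {0} → SL(2,ℝ)`. -/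
noncomputable def Psi (v : ℝ × ℝ) : Matrix (Fin 2) (Fin 2) ℝ :=
  !![v.1, -v.2 / (v.1 ^ 2 + v.2 ^ 2); v.2, v.1 / (v.1 ^ 2 + v.2 ^ 2)]

/-- The horocyclic matrix `n_s = [[1, s], [0, 1]]`. -/
def nMat (s : ℝ) : Matrix (Fin 2) (Fin 2) ℝ := !![1, s; 0, 1]

/-- The geodesic matrix `a_t = diag(e^{t/2}, e^{-t/2})`. -/
noncomputable def aMat (t : ℝ) : Matrix (Fin 2) (Fin 2) ℝ :=
  !![Real.exp (t / 2), 0; 0, Real.exp (-t / 2)]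

/-- The linear action of a `2×2` matrix on `ℝ²`. -/
def act (g : Matrix (Fin 2) (Fin 2) ℝ) (u : ℝ × ℝ) : ℝ × ℝ :=
  (g 0 0 * u.1 + g 0 1 * u.2, g 1 0 * u.1 + g 1 1 * u.2)

/-- The cocycle `c_u(g)`, read off as the `(0,1)` entry of `Ψ(gu)⁻¹ g Ψ(u)`. -/
noncomputable def coc (g : Matrix (Fin 2) (Fin 2) ℝ) (u : ℝ × ℝ) : ℝ :=
  ((Psi (act g u))⁻¹ * g * Psi u) 0 1

/-! Since `Ψ(v)` has determinant one and first column `v`, the matrix `Ψ(gu)⁻¹ g Ψ(u)` has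
determinant one and fixes `e₁`, so it is upper unipotent. Inserting `Ψ(hu) Ψ(hu)⁻¹` gives the
cocycle identity `c_u(gh) = c_{hu}(g) + c_u(h)`. At `u₀` both identities follow from it: `n_s`
fixes `u₀` and `c_{u₀}(n_s) = s`, while `a_t u₀ = e^{t/2} u₀`, `c_{u₀}(a_t) = 0`, and
`Ψ(λv) = Ψ(v) diag(λ, λ⁻¹)` gives `c_{λu}(g) = λ⁻² c_u(g)`. -/

lemma Psi_one_zero : Psi (1, 0) = 1 := by
  ext i j; fin_cases i <;> fin_cases j <;> simp [Psi]

lemma Psi_smul (c : ℝ) (v : ℝ × ℝ) : Psi (c • v) = Psi v * diagonal ![c, c⁻¹] := by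
  by_cases hc : c = 0
  · subst hc; ext i j; fin_cases i <;> fin_cases j <;> simp [Psi]
  ext i j; fin_cases i <;> fin_cases j <;> simp [Psi] <;> field_simp

lemma det_Psi {v : ℝ × ℝ} (hv : v ≠ 0) : (Psi v).det = 1 := by
  have hn : v.1 ^ 2 + v.2 ^ 2 ≠ 0 := by
    contrapose! hv
    obtain ⟨h1, h2⟩ := (add_eq_zero_iff_of_nonneg (sq_nonneg _) (sq_nonneg _)).1 hv
    exact Prod.ext (pow_eq_zero_iff two_ne_zero |>.1 h1) (pow_eq_zero_iff two_ne_zero |>.1 h2)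
  rw [Psi, det_fin_two_of]; field_simp; ring

lemma Psi_mulVec (v : ℝ × ℝ) : Psi v *ᵥ ![1, 0] = ![v.1, v.2] := by
  ext i; fin_cases i <;> simp [Psi]

lemma mulVec_eq_act (g : Matrix (Fin 2) (Fin 2) ℝ) (u : ℝ × ℝ) :
    g *ᵥ ![u.1, u.2] = ![(act g u).1, (act g u).2] := by
  ext i; fin_cases i <;> simp [act, mulVec, dotProduct, Fin.sum_univ_two]

lemma act_mul (g h : Matrix (Fin 2) (Fin 2) ℝ) (u : ℝ × ℝ) :
    act (g * h) u = act g (act h u) := by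
  simp only [act, mul_apply, Fin.sum_univ_two]; ext <;> ring

lemma act_smul (g : Matrix (Fin 2) (Fin 2) ℝ) (c : ℝ) (u : ℝ × ℝ) :
    act g (c • u) = c • act g u := by
  simp only [act, Prod.smul_mk, Prod.smul_fst, Prod.smul_snd, smul_eq_mul]; ext <;> ring

lemma act_ne_zero {g : Matrix (Fin 2) (Fin 2) ℝ} (hg : g.det ≠ 0) {u : ℝ × ℝ} (hu : u ≠ 0) :
    act g u ≠ 0 := by
  intro h
  have := eq_zero_of_mulVec_eq_zero hg (v := ![u.1, u.2]) (by
    rw [mulVec_eq_act, h]; ext i; fin_cases i <;> rfl)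
  exact hu (Prod.ext (congrFun this 0) (congrFun this 1))

lemma eq_nMat_of_det_eq_one {A : Matrix (Fin 2) (Fin 2) ℝ} (hA : A.det = 1)
    (h : A *ᵥ ![1, 0] = ![1, 0]) : A = nMat (A 0 1) := by
  have h0 : A 0 0 = 1 := by simpa [mulVec, dotProduct] using congrFun h 0
  have h1 : A 1 0 = 0 := by simpa [mulVec, dotProduct] using congrFun h 1
  rw [det_fin_two, h0, h1] at hA
  ext i j; fin_cases i <;> fin_cases j <;> simp [nMat, h0, h1]; linarith

lemma Psi_inv_mul_mul_Psi_eq_nMat {g : Matrix (Fin 2) (Fin 2) ℝ} (hg : g.det = 1) {u : ℝ × ℝ}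
    (hu : u ≠ 0) : (Psi (act g u))⁻¹ * g * Psi u = nMat (coc g u) := by
  have hdet : (Psi (act g u)).det = 1 := det_Psi (act_ne_zero (by simp [hg]) hu)
  apply eq_nMat_of_det_eq_one
  · rw [det_mul, det_mul, det_nonsing_inv, hg, det_Psi hu, hdet]
    norm_num
  · rw [← mulVec_mulVec, Psi_mulVec, ← mulVec_mulVec, mulVec_eq_act, ← Psi_mulVec, mulVec_mulVec,
      nonsing_inv_mul _ (by rw [hdet]; exact isUnit_one), one_mulVec]

lemma nMat_add (s t : ℝ) : nMat (s + t) = nMat s * nMat t := by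
  ext i j; fin_cases i <;> fin_cases j <;> simp [nMat, add_comm]

lemma coc_mul {g h : Matrix (Fin 2) (Fin 2) ℝ} (hg : g.det = 1) (hh : h.det = 1) {u : ℝ × ℝ}
    (hu : u ≠ 0) : coc (g * h) u = coc g (act h u) + coc h u := by
  have hhu : act h u ≠ 0 := act_ne_zero (by simp [hh]) hu
  have key : nMat (coc (g * h) u) = nMat (coc g (act h u) + coc h u) := by
    rw [nMat_add, ← Psi_inv_mul_mul_Psi_eq_nMat hg hhu, ← Psi_inv_mul_mul_Psi_eq_nMat hh hu,
      ← Psi_inv_mul_mul_Psi_eq_nMat (by rw [det_mul, hg, hh, one_mul]) hu, act_mul]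
    have : Psi (act h u) * (Psi (act h u))⁻¹ = 1 :=
      mul_nonsing_inv _ (by rw [det_Psi hhu]; exact isUnit_one)
    simp only [Matrix.mul_assoc]
    rw [← Matrix.mul_assoc (Psi (act h u)), this, Matrix.one_mul]
  simpa [nMat] using congrFun (congrFun key 0) 1

lemma inv_diagonal_inv_pair {c : ℝ} (hc : c ≠ 0) :
    (diagonal ![c, c⁻¹])⁻¹ = diagonal ![c⁻¹, c] := by
  refine inv_eq_left_inv ?_
  rw [diagonal_mul_diagonal, ← diagonal_one]
  congr 1; ext i; fin_cases i <;> simp [hc]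

lemma coc_smul (g : Matrix (Fin 2) (Fin 2) ℝ) {c : ℝ} (hc : c ≠ 0) (u : ℝ × ℝ) :
    coc g (c • u) = (c ^ 2)⁻¹ * coc g u := by
  rw [coc, coc, act_smul, Psi_smul, Psi_smul, Matrix.mul_inv_rev, inv_diagonal_inv_pair hc]
  set M := (Psi (act g u))⁻¹ * g * Psi u
  rw [show diagonal ![c⁻¹, c] * (Psi (act g u))⁻¹ * g * (Psi u * diagonal ![c, c⁻¹]) =
    diagonal ![c⁻¹, c] * M * diagonal ![c, c⁻¹] by simp only [M, Matrix.mul_assoc]]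
  simp only [mul_diagonal, diagonal_mul]
  simp; ring

lemma det_nMat (s : ℝ) : (nMat s).det = 1 := by
  simp [nMat, det_fin_two_of]

lemma act_nMat (s : ℝ) : act (nMat s) (1, 0) = (1, 0) := by
  simp [act, nMat]

lemma coc_nMat (s : ℝ) : coc (nMat s) (1, 0) = s := by
  rw [coc, act_nMat, Psi_one_zero]; simp [nMat]

lemma act_aMat (t : ℝ) : act (aMat t) (1, 0) = Real.exp (t / 2) • (1, 0) := by
  simp [act, aMat]

lemma aMat_eq_diagonal (t : ℝ) : aMat t = diagonal ![Real.exp (t / 2), (Real.exp (t / 2))⁻¹] := by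
  rw [aMat, ← Real.exp_neg, neg_div]
  ext i j; fin_cases i <;> fin_cases j <;> simp

lemma det_aMat (t : ℝ) : (aMat t).det = 1 := by
  rw [aMat, det_fin_two_of, ← Real.exp_add]; simp [neg_div]

lemma coc_aMat (t : ℝ) : coc (aMat t) (1, 0) = 0 := by
  rw [coc, act_aMat, Psi_smul, Psi_one_zero, Matrix.one_mul, Matrix.mul_one, ← aMat_eq_diagonal,
    nonsing_inv_mul _ (by rw [det_aMat]; exact isUnit_one)]
  rfl

/-- The matrix `Ψ(gu)⁻¹ g Ψ(u)` is upper unipotent, so the cocycle `c_u(g)` is well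
defined by `n_{c_u(g)} = Ψ(gu)⁻¹ g Ψ(u)`; and it satisfies
`c_{u₀}(g n_s) = c_{u₀}(g) + s` and `c_{u₀}(g a_t) = e^{-t} c_{u₀}(g)`, where `u₀ = (1,0)`. -/
theorem cocycle_welldefined_and_props (g : Matrix (Fin 2) (Fin 2) ℝ) (hg : g.det = 1)
    (u : ℝ × ℝ) (hu : u ≠ 0) :
    (Psi (act g u))⁻¹ * g * Psi u = nMat (coc g u) ∧
    (∀ s : ℝ, coc (g * nMat s) (1, 0) = coc g (1, 0) + s) ∧
    (∀ t : ℝ, coc (g * aMat t) (1, 0) = Real.exp (-t) * coc g (1, 0)) := by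
  have hu₀ : ((1 : ℝ), (0 : ℝ)) ≠ 0 := by simp
  refine ⟨Psi_inv_mul_mul_Psi_eq_nMat hg hu, fun s => ?_, fun t => ?_⟩
  · rw [coc_mul hg (det_nMat s) hu₀, act_nMat, coc_nMat]
  · have hexp : (Real.exp (t / 2) ^ 2)⁻¹ = Real.exp (-t) := by
      rw [← Real.exp_nat_mul, ← Real.exp_neg]; ring_nf
    rw [coc_mul hg (det_aMat t) hu₀, act_aMat, coc_smul _ (Real.exp_ne_zero _), coc_aMat, add_zero,
      hexp]
end

section
/- When M(2,R) is equipped with the l² (Frobenius) norm and R² with the Euclidean norm, for all nonzero vectors u, v in R² and all real s, one has κ(u,v,s)² = |v|²/|u|² + s² |v|² |u|², where κ(u,v,s) = ‖ Ψ(v) [[1,s],[0,0]] Ψ(u)^{-1} ‖. -/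
open Matrix

/-- The Frobenius (`l²`) norm on `2×2` real matrices. -/
noncomputable def frob (m : Matrix (Fin 2) (Fin 2) ℝ) : ℝ :=
  Real.sqrt (∑ i : Fin 2, ∑ j : Fin 2, (m i j) ^ 2)

/-- The squared Euclidean norm on `ℝ²`. -/
def normSq (v : ℝ × ℝ) : ℝ := v.1 ^ 2 + v.2 ^ 2

/-- `κ(u,v,s) = ‖ Ψ(v) [[1,s],[0,0]] Ψ(u)⁻¹ ‖` for the Frobenius norm. -/
noncomputable def kappa (u v : ℝ × ℝ) (s : ℝ) : ℝ :=
  frob (Psi v * !![1, s; 0, 0] * (Psi u)⁻¹)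

lemma normSq_ne_zero (u : ℝ × ℝ) (hu : u ≠ 0) : u.1 ^ 2 + u.2 ^ 2 ≠ 0 := by
  intro hz
  apply hu
  have h1 : u.1 = 0 := by nlinarith [sq_nonneg u.1, sq_nonneg u.2]
  have h2 : u.2 = 0 := by nlinarith [sq_nonneg u.1, sq_nonneg u.2]
  exact Prod.ext h1 h2

lemma Psi_inv (u : ℝ × ℝ) (hu : u ≠ 0) :
    (Psi u)⁻¹ = !![u.1 / (u.1 ^ 2 + u.2 ^ 2), u.2 / (u.1 ^ 2 + u.2 ^ 2); -u.2, u.1] := by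
  have hq := normSq_ne_zero u hu
  apply inv_eq_right_inv
  ext i j
  fin_cases i <;> fin_cases j <;>
    simp [Psi, Matrix.mul_apply, Fin.sum_univ_succ, Matrix.one_apply] <;> field_simp <;> ring

/-- For the Frobenius norm, `κ(u,v,s)² = |v|²/|u|² + s² |v|² |u|²`. -/
theorem kappa_sq (u v : ℝ × ℝ) (hu : u ≠ 0) (hv : v ≠ 0) (s : ℝ) :
    kappa u v s ^ 2 = normSq v / normSq u + s ^ 2 * normSq v * normSq u := by
  have hq := normSq_ne_zero u hu
  rw [kappa, Psi_inv u hu, frob, Real.sq_sqrt (by positivity)]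
  simp [Psi, Matrix.mul_apply, Fin.sum_univ_succ, normSq]
  field_simp
  ring
end
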